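/- Suppose ψ ∈ L²(μ) is a unit vector lying in the kernel of the Ruelle operator L, and let ψ̂ be the rank-one orthogonal projection φ ↦ ⟨φ,ψ⟩ψ. Then ‖[D, π(ψ̂)]‖ = ‖K ψ̂ − ψ̂ K‖ = ‖L ψ̂ − ψ̂ L‖ = 1. Moreover, if ψ = K^k(f) for some k ≥ 1 and some unit vector f ∈ L²(μ) with Lf = 0, then likewise ‖[D, π(ψ̂)]‖ = 1. -/

import Mathlib

open MeasureTheory ContinuousLinearMap
open scoped RealInnerProductSpace InnerProductSpace ENNReal

noncomputable section

/-- The shift space `Ω = {0,1}^ℕ`, with `false` playing the role of the symbol `0`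
and `true` of the symbol `1`. -/
abbrev Ω : Type := ℕ → Bool

/-- The shift map `σ`, `σ(x)ₙ = x_{n+1}`. -/
def shiftMap : Ω → Ω := fun x n => x (n + 1)

/-- Prepending a symbol: `consSeq a x = ax`. -/
def consSeq (a : Bool) (x : Ω) : Ω := fun n => Nat.casesOn n a (fun k => x k)

/-- The cylinder set `[w]` of sequences beginning with the finite word `w`. -/
def cylinder (w : List Bool) : Set Ω := {x | ∀ i : Fin w.length, x (i : ℕ) = w.get i}

/-- The Hilbert space `L²(μ)` (real). -/
abbrev E (μ : Measure Ω) := Lp (α := Ω) ℝ 2 μ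

/-- The Hilbert space `H = L²(μ) × L²(μ)` with the norm `√(‖φ‖² + ‖ψ‖²)`. -/
abbrev HS (μ : Measure Ω) := WithLp 2 (E μ × E μ)

variable {μ : Measure Ω}

/-- The diagonal block operator `(φ, ψ) ↦ (A₁φ, A₂ψ)` on `H`. -/
def blockDiag (A₁ A₂ : E μ →L[ℝ] E μ) : HS μ →L[ℝ] HS μ :=
  ((WithLp.prodContinuousLinearEquiv 2 ℝ (E μ) (E μ)).symm.toContinuousLinearMap).comp
    (((A₁.comp (ContinuousLinearMap.fst ℝ (E μ) (E μ))).prod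
        (A₂.comp (ContinuousLinearMap.snd ℝ (E μ) (E μ)))).comp
      (WithLp.prodContinuousLinearEquiv 2 ℝ (E μ) (E μ)).toContinuousLinearMap)

/-- The antidiagonal block operator `(φ, ψ) ↦ (A₁ψ, A₂φ)` on `H`. -/
def blockAntidiag (A₁ A₂ : E μ →L[ℝ] E μ) : HS μ →L[ℝ] HS μ :=
  ((WithLp.prodContinuousLinearEquiv 2 ℝ (E μ) (E μ)).symm.toContinuousLinearMap).comp
    (((A₁.comp (ContinuousLinearMap.snd ℝ (E μ) (E μ))).prod
        (A₂.comp (ContinuousLinearMap.fst ℝ (E μ) (E μ)))).comp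
      (WithLp.prodContinuousLinearEquiv 2 ℝ (E μ) (E μ)).toContinuousLinearMap)

/-- The diagonal representation `π(A)(φ,ψ) = (Aφ, Aψ)`. -/
def diagRep (A : E μ →L[ℝ] E μ) : HS μ →L[ℝ] HS μ := blockDiag A A

/-- The Dirac operator `D(φ,ψ) = (Kψ, Lφ)` associated with the pair `(K, L)`. -/
def dirac (K L : E μ →L[ℝ] E μ) : HS μ →L[ℝ] HS μ := blockAntidiag K L

/-- The commutator `[D, π(A)]`. -/
def commD (K L A : E μ →L[ℝ] E μ) : HS μ →L[ℝ] HS μ :=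
  (dirac K L).comp (diagRep A) - (diagRep A).comp (dirac K L)

/-- The rank-one orthogonal projection onto the span of the unit vector `ψ`:
`φ ↦ ⟪ψ, φ⟫ • ψ`. -/
def rankOneProj (ψ : E μ) : E μ →L[ℝ] E μ := (innerSL ℝ ψ).smulRight ψ

/-- The Haar-basis element `e_w = 2^{ℓ(w)/2} (χ_{[w1]} - χ_{[w0]})`, as a function on `Ω`. -/
def haarFun (w : List Bool) : Ω → ℝ := fun x =>
  (2 : ℝ) ^ ((w.length : ℝ) / 2) *
    ((cylinder (w ++ [true])).indicator 1 x - (cylinder (w ++ [false])).indicator 1 x)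

lemma continuous_shiftMap : Continuous shiftMap :=
  continuous_pi fun n => continuous_apply (n + 1)

lemma continuous_consSeq (a : Bool) : Continuous (consSeq a) := by
  apply continuous_pi
  intro n
  cases n with
  | zero => exact continuous_const
  | succ k => exact continuous_apply k

/-- The Koopman operator on continuous functions: `f ↦ f ∘ σ`. -/
def koopmanC (f : C(Ω, ℝ)) : C(Ω, ℝ) := f.comp ⟨shiftMap, continuous_shiftMap⟩

/-- The Ruelle operator on continuous functions: `(Lf)(x) = (f(0x) + f(1x))/2`. -/
def ruelleC (f : C(Ω, ℝ)) : C(Ω, ℝ) :=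
  ⟨fun x => (f (consSeq false x) + f (consSeq true x)) / 2,
    ((f.continuous.comp (continuous_consSeq false)).add
      (f.continuous.comp (continuous_consSeq true))).div_const 2⟩

end

/-! For the projection `P = |ψ⟩⟨ψ|` onto a unit vector with `⟪ψ, Kψ⟫ = 0`, the commutator
`KP - PK = |Kψ⟩⟨ψ| - |ψ⟩⟨K†ψ|` is a difference of rank-one maps whose ranges `Kψ ⊥ ψ` and whose
sources `ψ ⊥ K†ψ` are orthogonal, so by Bessel it has norm at most `1`; it maps `ψ` to the unit
vector `Kψ`, so the norm is exactly `1`. Since `P` is self-adjoint, `LP - PL = -(KP - PK)†` has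
the same norm, and `[D, π(P)]` is block-antidiagonal with these two blocks. Both `Lψ = 0` and
`ψ = K^k f` with `Lf = 0` give `⟪ψ, Kψ⟫ = 0`, the latter because `K` preserves inner products. -/

open InnerProductSpace

section HilbertSpace

variable {F : Type*} [NormedAddCommGroup F] [InnerProductSpace ℝ F]

lemma inner_sq_add_inner_sq_le_norm_sq {a c : F} (ha : ‖a‖ = 1) (hc : ‖c‖ ≤ 1) (hac : ⟪a, c⟫ = 0)
    (x : F) : ⟪a, x⟫ ^ 2 + ⟪c, x⟫ ^ 2 ≤ ‖x‖ ^ 2 := by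
  set y := x - ⟪a, x⟫ • a
  have hay : ⟪a, y⟫ = 0 := by simp [y, inner_sub_right, real_inner_smul_right, ha]
  have hcy : ⟪c, x⟫ = ⟪c, y⟫ := by
    simp [y, inner_sub_right, real_inner_smul_right, real_inner_comm a c, hac]
  have hx : ‖x‖ ^ 2 = ⟪a, x⟫ ^ 2 + ‖y‖ ^ 2 := by
    conv_lhs => rw [show x = ⟪a, x⟫ • a + y by simp [y]]
    simp [norm_add_sq_real, real_inner_smul_left, hay, norm_smul, ha]
  have hcy_le : ⟪c, y⟫ ^ 2 ≤ ‖y‖ ^ 2 := by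
    rw [← sq_abs]
    gcongr
    exact (abs_real_inner_le_norm c y).trans (mul_le_of_le_one_left (norm_nonneg y) hc)
  rw [hcy, hx]
  linarith

lemma norm_rankOne_sub_rankOne_le {a b c : F} (ha : ‖a‖ = 1) (hb : ‖b‖ ≤ 1) (hc : ‖c‖ ≤ 1)
    (hab : ⟪a, b⟫ = 0) (hac : ⟪a, c⟫ = 0) : ‖rankOne ℝ b a - rankOne ℝ a c‖ ≤ 1 := by
  refine opNorm_le_bound _ zero_le_one fun x => ?_
  have hsq : ‖(rankOne ℝ b a - rankOne ℝ a c) x‖ ^ 2 ≤ ‖x‖ ^ 2 := calc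
    _ = ⟪a, x⟫ ^ 2 * ‖b‖ ^ 2 + ⟪c, x⟫ ^ 2 := by
      simp [norm_sub_sq_real, norm_smul, real_inner_smul_left, real_inner_smul_right,
        real_inner_comm a b, hab, ha, mul_pow]
    _ ≤ ⟪a, x⟫ ^ 2 + ⟪c, x⟫ ^ 2 := by
      gcongr
      exact mul_le_of_le_one_right (sq_nonneg _) (pow_le_one₀ (norm_nonneg b) hb)
    _ ≤ ‖x‖ ^ 2 := inner_sq_add_inner_sq_le_norm_sq ha hc hac x
  rw [one_mul]
  exact (pow_le_pow_iff_left₀ (norm_nonneg _) (norm_nonneg _) two_ne_zero).1 hsq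

variable [CompleteSpace F]

lemma inner_pow_apply_pow_apply {K : F →L[ℝ] F} (hK : adjoint K ∘L K = 1) (k : ℕ) (x y : F) :
    ⟪(K ^ k) x, (K ^ k) y⟫ = ⟪x, y⟫ := by
  induction k generalizing x y with
  | zero => simp
  | succ k ih =>
    rw [pow_succ, mul_apply_eq_comp, mul_apply_eq_comp, ih,
      (inner_map_map_iff_adjoint_comp_self K).2 hK]

lemma norm_adjoint_comp_sub_comp_adjoint {P : F →L[ℝ] F} (hP : adjoint P = P) (A : F →L[ℝ] F) :
    ‖adjoint A ∘L P - P ∘L adjoint A‖ = ‖A ∘L P - P ∘L A‖ := by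
  rw [← adjoint.norm_map (A ∘L P - P ∘L A), map_sub, adjoint_comp, adjoint_comp, hP, norm_sub_rev]

theorem norm_comp_rankOne_sub_rankOne_comp_eq_one {K : F →L[ℝ] F} (hK : adjoint K ∘L K = 1)
    {ψ : F} (hψ : ‖ψ‖ = 1) (horth : ⟪ψ, K ψ⟫ = 0) :
    ‖K ∘L rankOne ℝ ψ ψ - rankOne ℝ ψ ψ ∘L K‖ = 1 := by
  have hKψ : ‖K ψ‖ = 1 := by rw [(norm_map_iff_adjoint_comp_self K).2 hK, hψ]
  have hK_le : ‖K‖ ≤ 1 :=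
    opNorm_le_bound _ zero_le_one fun x => by rw [(norm_map_iff_adjoint_comp_self K).2 hK, one_mul]
  have hadjψ : ‖adjoint K ψ‖ ≤ 1 :=
    (unit_le_opNorm _ _ hψ.le).trans (by rwa [adjoint.norm_map])
  have hψ_adjψ : ⟪ψ, adjoint K ψ⟫ = 0 := by rw [adjoint_inner_right, real_inner_comm, horth]
  rw [comp_rankOne, rankOne_comp]
  refine le_antisymm (norm_rankOne_sub_rankOne_le hψ hKψ.le hadjψ horth hψ_adjψ) ?_
  calc 1 = ‖(rankOne ℝ (K ψ) ψ - rankOne ℝ ψ (adjoint K ψ)) ψ‖ := by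
        simp [hψ, real_inner_comm ψ, hψ_adjψ, hKψ]
    _ ≤ _ := unit_le_opNorm _ _ hψ.le

end HilbertSpace

section Dirac

variable {μ : Measure Ω}

lemma commD_eq_blockAntidiag (K L A : E μ →L[ℝ] E μ) :
    commD K L A = blockAntidiag (K ∘L A - A ∘L K) (L ∘L A - A ∘L L) := by
  ext p : 1
  simp [commD, dirac, diagRep, blockDiag, blockAntidiag, ← WithLp.toLp_sub]

lemma blockAntidiag_apply (B C : E μ →L[ℝ] E μ) (p : HS μ) :
    blockAntidiag B C p = WithLp.toLp 2 (B p.snd, C p.fst) := rfl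

lemma norm_blockAntidiag (B C : E μ →L[ℝ] E μ) : ‖blockAntidiag B C‖ = max ‖B‖ ‖C‖ := by
  set M := max ‖B‖ ‖C‖
  refine le_antisymm (opNorm_le_bound _ (le_max_of_le_left (norm_nonneg B)) fun p => ?_)
    (max_le (opNorm_le_bound _ (norm_nonneg _) fun x => ?_)
      (opNorm_le_bound _ (norm_nonneg _) fun x => ?_))
  · have hsq : ‖blockAntidiag B C p‖ ^ 2 ≤ (M * ‖p‖) ^ 2 := calc
      _ = ‖B p.snd‖ ^ 2 + ‖C p.fst‖ ^ 2 := by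
        simp [WithLp.prod_norm_sq_eq_of_L2, blockAntidiag_apply]
      _ ≤ (M * ‖p.snd‖) ^ 2 + (M * ‖p.fst‖) ^ 2 := by
        gcongr
        · exact B.le_of_opNorm_le (le_max_left _ _) _
        · exact C.le_of_opNorm_le (le_max_right _ _) _
      _ = (M * ‖p‖) ^ 2 := by simp only [mul_pow, WithLp.prod_norm_sq_eq_of_L2]; ring
    exact (pow_le_pow_iff_left₀ (norm_nonneg _) (by positivity) two_ne_zero).1 hsq
  · calc ‖B x‖ = ‖blockAntidiag B C (WithLp.toLp 2 (0, x))‖ := by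
          simp [blockAntidiag_apply, WithLp.norm_toLp_fst]
      _ ≤ _ := le_opNorm_of_le _ (WithLp.norm_toLp_snd _ _ _ x).le
  · calc ‖C x‖ = ‖blockAntidiag B C (WithLp.toLp 2 (x, 0))‖ := by
          simp [blockAntidiag_apply, WithLp.norm_toLp_snd]
      _ ≤ _ := le_opNorm_of_le _ (WithLp.norm_toLp_fst _ _ _ x).le

end Dirac

theorem stmt9_general
    (μ : Measure Ω)
    (K L : E μ →L[ℝ] E μ)
    (hadj : ContinuousLinearMap.adjoint K = L)
    (hLK : L ∘L K = ContinuousLinearMap.id ℝ (E μ))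
    (ψ : E μ) (hψ : ‖ψ‖ = 1) :
    (L ψ = 0 →
      ‖commD K L (rankOneProj ψ)‖ = 1 ∧
      ‖K ∘L rankOneProj ψ - rankOneProj ψ ∘L K‖ = 1 ∧
      ‖L ∘L rankOneProj ψ - rankOneProj ψ ∘L L‖ = 1) ∧
    (∀ k : ℕ, 1 ≤ k → ∀ f : E μ, ‖f‖ = 1 → L f = 0 → ψ = (K ^ k) f →
      ‖commD K L (rankOneProj ψ)‖ = 1) := by
  subst hadj
  have hK : adjoint K ∘L K = 1 := hLK
  have hP : ∀ φ : E μ, adjoint (rankOneProj φ) = rankOneProj φ := fun φ => adjoint_rankOne φ φ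
  -- `rankOneProj φ` unfolds to `rankOne ℝ φ φ`.
  have hcomm : ∀ φ : E μ, ‖φ‖ = 1 → ⟪φ, K φ⟫ = 0 →
      ‖K ∘L rankOneProj φ - rankOneProj φ ∘L K‖ = 1 :=
    fun _ hφ horth => norm_comp_rankOne_sub_rankOne_comp_eq_one hK hφ horth
  have hcommD : ∀ φ : E μ, ‖φ‖ = 1 → ⟪φ, K φ⟫ = 0 →
      ‖commD K (adjoint K) (rankOneProj φ)‖ = 1 := by
    intro φ hφ horth
    rw [commD_eq_blockAntidiag, norm_blockAntidiag, norm_adjoint_comp_sub_comp_adjoint (hP φ),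
      hcomm φ hφ horth, max_self]
  refine ⟨fun hLψ => ?_, fun k _ f _ hLf hψf => hcommD ψ hψ ?_⟩
  · have horth : ⟪ψ, K ψ⟫ = 0 := by rw [← adjoint_inner_left, hLψ, inner_zero_left]
    refine ⟨hcommD ψ hψ horth, hcomm ψ hψ horth, ?_⟩
    rw [norm_adjoint_comp_sub_comp_adjoint (hP ψ)]
    exact hcomm ψ hψ horth
  · rw [hψf, ← mul_apply_eq_comp, ← pow_succ', pow_succ, mul_apply_eq_comp,
      inner_pow_apply_pow_apply hK, ← adjoint_inner_left, hLf, inner_zero_left]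

/-- If the unit vector `ψ` is in the kernel of `L`, then
`‖[D, π(ψ̂)]‖ = ‖K ψ̂ − ψ̂ K‖ = ‖L ψ̂ − ψ̂ L‖ = 1`; moreover the same holds if
`ψ = K^k f` for some `k ≥ 1` and a unit vector `f` with `L f = 0`. -/
theorem stmt9
    (μ : Measure Ω) [IsProbabilityMeasure μ]
    (hμ : ∀ w : List Bool, μ (cylinder w) = (1 / 2) ^ w.length)
    (K L : E μ →L[ℝ] E μ)
    (hK : ∀ g : E μ, (K g : Ω → ℝ) =ᵐ[μ] fun x => g (shiftMap x))
    (hL : ∀ g : E μ, (L g : Ω → ℝ) =ᵐ[μ]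
      fun x => (g (consSeq false x) + g (consSeq true x)) / 2)
    (hadj : ContinuousLinearMap.adjoint K = L)
    (hLK : L ∘L K = ContinuousLinearMap.id ℝ (E μ))
    (ψ : E μ) (hψ : ‖ψ‖ = 1) :
    (L ψ = 0 →
      ‖commD K L (rankOneProj ψ)‖ = 1 ∧
      ‖K ∘L rankOneProj ψ - rankOneProj ψ ∘L K‖ = 1 ∧
      ‖L ∘L rankOneProj ψ - rankOneProj ψ ∘L L‖ = 1) ∧
    (∀ k : ℕ, 1 ≤ k → ∀ f : E μ, ‖f‖ = 1 → L f = 0 → ψ = (K ^ k) f →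
      ‖commD K L (rankOneProj ψ)‖ = 1) :=
  stmt9_general μ K L hadj hLK ψ hψ
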